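/- In the singular braid monoid SB_n, the element σⁿ, where σ = σ₁σ₂⋯σ_{n-1}, commutes with x₁ (and hence with every xᵢ). -/

import Mathlib

/-- Generators of the singular braid monoid `SB_n`: `s i` is `σ_{i+1}`, `sInv i` is
`σ_{i+1}⁻¹`, and `x i` is `x_{i+1}`, for `i : Fin (n-1)`. -/
inductive SBGen (n : ℕ) : Type
  | s (i : Fin (n - 1))
  | sInv (i : Fin (n - 1))
  | x (i : Fin (n - 1))

open FreeMonoid in
/-- The defining relations of the singular braid monoid `SB_n`. -/
inductive SBRel (n : ℕ) : FreeMonoid (SBGen n) → FreeMonoid (SBGen n) → Prop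
  | comm_ss (i j : Fin (n - 1)) (h : (i : ℕ) + 1 < (j : ℕ)) :
      SBRel n (of (.s i) * of (.s j)) (of (.s j) * of (.s i))
  | comm_xx (i j : Fin (n - 1)) (h : (i : ℕ) + 1 < (j : ℕ)) :
      SBRel n (of (.x i) * of (.x j)) (of (.x j) * of (.x i))
  | comm_xs (i j : Fin (n - 1)) (h1 : (i : ℕ) ≠ (j : ℕ) + 1) (h2 : (j : ℕ) ≠ (i : ℕ) + 1) :
      SBRel n (of (.x i) * of (.s j)) (of (.s j) * of (.x i))
  | braid (i : ℕ) (h : i + 1 < n - 1) :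
      SBRel n (of (.s ⟨i, by omega⟩) * of (.s ⟨i + 1, h⟩) * of (.s ⟨i, by omega⟩))
        (of (.s ⟨i + 1, h⟩) * of (.s ⟨i, by omega⟩) * of (.s ⟨i + 1, h⟩))
  | mixed₁ (i : ℕ) (h : i + 1 < n - 1) :
      SBRel n (of (.s ⟨i, by omega⟩) * of (.s ⟨i + 1, h⟩) * of (.x ⟨i, by omega⟩))
        (of (.x ⟨i + 1, h⟩) * of (.s ⟨i, by omega⟩) * of (.s ⟨i + 1, h⟩))
  | mixed₂ (i : ℕ) (h : i + 1 < n - 1) :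
      SBRel n (of (.s ⟨i + 1, h⟩) * of (.s ⟨i, by omega⟩) * of (.x ⟨i + 1, h⟩))
        (of (.x ⟨i, by omega⟩) * of (.s ⟨i + 1, h⟩) * of (.s ⟨i, by omega⟩))
  | inv_right (i : Fin (n - 1)) : SBRel n (of (.s i) * of (.sInv i)) 1
  | inv_left (i : Fin (n - 1)) : SBRel n (of (.sInv i) * of (.s i)) 1

/-- The singular braid monoid `SB_n`. -/
def SingularBraidMonoid (n : ℕ) := PresentedMonoid (SBRel n)

instance (n : ℕ) : Monoid (SingularBraidMonoid n) :=
  inferInstanceAs (Monoid (PresentedMonoid (SBRel n)))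

/-!
Write `σ = σ₁ ⋯ σ_{n-1}`. For `i ≤ n - 2` the relation `σᵢσᵢ₊₁xᵢ = xᵢ₊₁σᵢσᵢ₊₁`, together with the
far commutations, gives `σ xᵢ = xᵢ₊₁ σ`, so `σⁿ⁻² x₁ = x_{n-1} σⁿ⁻²`. For the remaining two factors,
`σ² = σ₁ (σ₂ ⋯ σ_{n-1})(σ₁ ⋯ σ_{n-2}) σ_{n-1}`, and the middle product regroups by far
commutations as `(σ₂σ₁)(σ₃σ₂) ⋯ (σ_{n-1}σ_{n-2})`; the relation `σⱼ₊₁σⱼxⱼ₊₁ = xⱼσⱼ₊₁σⱼ` moves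
`x_{n-1}` through it from right to left, arriving as `x₁`. The outer factors `σ₁`, `σ_{n-1}`
commute with `x₁`, `x_{n-1}` respectively, hence `σ² x_{n-1} = x₁ σ²`.
-/

namespace SingularBraidMonoid

variable (n : ℕ)

/-- `sigmaGen n i` is `σ_{i+1}`, indexed from `0` as in `SBGen`; out of range it is the junk
value `1`, which spares index arithmetic any `Fin` casts. -/
def sigmaGen (i : ℕ) : SingularBraidMonoid n :=
  if h : i < n - 1 then PresentedMonoid.of (SBRel n) (.s ⟨i, h⟩) else 1

def xGen (i : ℕ) : SingularBraidMonoid n :=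
  if h : i < n - 1 then PresentedMonoid.of (SBRel n) (.x ⟨i, h⟩) else 1

variable {n}

theorem sigmaGen_of_lt {i : ℕ} (h : i < n - 1) :
    sigmaGen n i = PresentedMonoid.of (SBRel n) (.s ⟨i, h⟩) :=
  dif_pos h

theorem xGen_of_lt {i : ℕ} (h : i < n - 1) :
    xGen n i = PresentedMonoid.of (SBRel n) (.x ⟨i, h⟩) :=
  dif_pos h

theorem commute_sigmaGen_sigmaGen {i j : ℕ} (hij : i + 1 < j) :
    Commute (sigmaGen n i) (sigmaGen n j) := by
  by_cases hi : i < n - 1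
  · by_cases hj : j < n - 1
    · rw [sigmaGen_of_lt hi, sigmaGen_of_lt hj]
      exact PresentedMonoid.mk_eq_mk_of_rel (SBRel.comm_ss ⟨i, hi⟩ ⟨j, hj⟩ hij)
    · simp [sigmaGen, hj]
  · simp [sigmaGen, hi]

theorem commute_xGen_sigmaGen {i j : ℕ} (h₁ : i ≠ j + 1) (h₂ : j ≠ i + 1) :
    Commute (xGen n i) (sigmaGen n j) := by
  by_cases hi : i < n - 1
  · by_cases hj : j < n - 1
    · rw [xGen_of_lt hi, sigmaGen_of_lt hj]
      exact PresentedMonoid.mk_eq_mk_of_rel (SBRel.comm_xs ⟨i, hi⟩ ⟨j, hj⟩ h₁ h₂)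
    · simp [sigmaGen, hj]
  · simp [xGen, hi]

theorem sigmaGen_mul_sigmaGen_succ_mul_xGen {i : ℕ} (h : i + 1 < n - 1) :
    sigmaGen n i * sigmaGen n (i + 1) * xGen n i =
      xGen n (i + 1) * sigmaGen n i * sigmaGen n (i + 1) := by
  rw [sigmaGen_of_lt (i := i) (by omega), sigmaGen_of_lt h, xGen_of_lt (i := i) (by omega),
    xGen_of_lt h]
  exact PresentedMonoid.mk_eq_mk_of_rel (SBRel.mixed₁ i h)

theorem sigmaGen_succ_mul_sigmaGen_mul_xGen_succ {i : ℕ} (h : i + 1 < n - 1) :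
    sigmaGen n (i + 1) * sigmaGen n i * xGen n (i + 1) =
      xGen n i * sigmaGen n (i + 1) * sigmaGen n i := by
  rw [sigmaGen_of_lt (i := i) (by omega), sigmaGen_of_lt h, xGen_of_lt (i := i) (by omega),
    xGen_of_lt h]
  exact PresentedMonoid.mk_eq_mk_of_rel (SBRel.mixed₂ i h)

variable (n) in
def sigmaProd (a k : ℕ) : SingularBraidMonoid n :=
  (List.ofFn fun t : Fin k => sigmaGen n (a + t)).prod

theorem sigmaProd_add (a k l : ℕ) :
    sigmaProd n a (k + l) = sigmaProd n a k * sigmaProd n (a + k) l := by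
  simp [sigmaProd, List.ofFn_add, add_assoc]

theorem sigmaProd_one (a : ℕ) : sigmaProd n a 1 = sigmaGen n a := by
  simp [sigmaProd]

theorem sigmaProd_succ (a k : ℕ) :
    sigmaProd n a (k + 1) = sigmaProd n a k * sigmaGen n (a + k) := by
  rw [sigmaProd_add, sigmaProd_one]

theorem sigmaProd_succ' (a k : ℕ) :
    sigmaProd n a (k + 1) = sigmaGen n a * sigmaProd n (a + 1) k := by
  rw [add_comm k, sigmaProd_add, sigmaProd_one]

theorem commute_sigmaProd {c : SingularBraidMonoid n} {a k : ℕ}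
    (h : ∀ t < k, Commute c (sigmaGen n (a + t))) : Commute c (sigmaProd n a k) :=
  Commute.list_prod_right _ _ <| by
    simpa [List.forall_mem_ofFn_iff] using fun t : Fin k => h t t.2

variable (n) in
def sigma : SingularBraidMonoid n :=
  sigmaProd n 0 (n - 1)

theorem sigma_mul_xGen {i : ℕ} (h : i + 1 < n - 1) :
    sigma n * xGen n i = xGen n (i + 1) * sigma n := by
  obtain ⟨l, hl⟩ : ∃ l, n - 1 = i + 2 + l := ⟨n - 1 - (i + 2), by omega⟩
  have hsplit : sigma n = sigmaProd n 0 i * (sigmaGen n i * sigmaGen n (i + 1)) *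
      sigmaProd n (i + 2) l := by
    rw [sigma, hl, sigmaProd_add, sigmaProd_succ, sigmaProd_succ]
    simp only [zero_add, mul_assoc]
  have hleft : Commute (xGen n (i + 1)) (sigmaProd n 0 i) :=
    commute_sigmaProd fun t ht => commute_xGen_sigmaGen (by omega) (by omega)
  have hright : Commute (xGen n i) (sigmaProd n (i + 2) l) :=
    commute_sigmaProd fun t _ => commute_xGen_sigmaGen (by omega) (by omega)
  have hmid : sigmaGen n i * sigmaGen n (i + 1) * xGen n i =
      xGen n (i + 1) * (sigmaGen n i * sigmaGen n (i + 1)) := by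
    rw [sigmaGen_mul_sigmaGen_succ_mul_xGen h, mul_assoc]
  rw [hsplit, mul_assoc, ← hright.eq, ← mul_assoc, mul_assoc _ _ (xGen n i), hmid,
    ← mul_assoc, ← hleft.eq]
  simp only [mul_assoc]

theorem sigma_pow_mul_xGen_zero {k : ℕ} (hk : k ≤ n - 2) :
    sigma n ^ k * xGen n 0 = xGen n k * sigma n ^ k := by
  induction k with
  | zero => simp
  | succ k ih =>
    rw [pow_succ', mul_assoc, ih (by omega), ← mul_assoc, sigma_mul_xGen (by omega), mul_assoc]

theorem sigmaProd_succ_mul_sigmaProd_succ (a k : ℕ) :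
    sigmaProd n (a + 1) (k + 1) * sigmaProd n a (k + 1) =
      sigmaGen n (a + 1) * sigmaGen n a * (sigmaProd n (a + 2) k * sigmaProd n (a + 1) k) := by
  have hcomm : Commute (sigmaGen n a) (sigmaProd n (a + 2) k) :=
    commute_sigmaProd fun t _ => commute_sigmaGen_sigmaGen (by omega)
  rw [sigmaProd_succ', sigmaProd_succ' a, mul_assoc, ← mul_assoc (sigmaProd n _ k), ← hcomm.eq]
  simp only [mul_assoc]

theorem sigmaProd_succ_mul_sigmaProd_mul_xGen {a k : ℕ} (h : a + k < n - 1) :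
    sigmaProd n (a + 1) k * sigmaProd n a k * xGen n (a + k) =
      xGen n a * (sigmaProd n (a + 1) k * sigmaProd n a k) := by
  induction k generalizing a with
  | zero => simp [sigmaProd]
  | succ k ih =>
    have ih' := ih (a := a + 1) (by omega)
    rw [show a + 1 + 1 = a + 2 by rfl, show a + 1 + k = a + (k + 1) by omega] at ih'
    rw [sigmaProd_succ_mul_sigmaProd_succ, mul_assoc, ih', ← mul_assoc,
      sigmaGen_succ_mul_sigmaGen_mul_xGen_succ (by omega)]
    simp only [mul_assoc]

theorem sigma_sq_mul_xGen (hn : 2 ≤ n) :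
    sigma n ^ 2 * xGen n (n - 2) = xGen n 0 * sigma n ^ 2 := by
  have hsplit : sigma n ^ 2 =
      sigmaGen n 0 * (sigmaProd n 1 (n - 2) * sigmaProd n 0 (n - 2)) * sigmaGen n (n - 2) := by
    rw [sq]
    nth_rw 1 [sigma, show n - 1 = n - 2 + 1 by omega, sigmaProd_succ']
    rw [sigma, show n - 1 = n - 2 + 1 by omega, sigmaProd_succ]
    simp only [zero_add, mul_assoc]
  have hlast : Commute (xGen n (n - 2)) (sigmaGen n (n - 2)) :=
    commute_xGen_sigmaGen (by omega) (by omega)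
  have hfirst : Commute (xGen n 0) (sigmaGen n 0) :=
    commute_xGen_sigmaGen (by omega) (by omega)
  have hmid := sigmaProd_succ_mul_sigmaProd_mul_xGen (n := n) (a := 0) (k := n - 2) (by omega)
  simp only [zero_add] at hmid
  rw [hsplit, mul_assoc, ← hlast.eq, ← mul_assoc, mul_assoc (sigmaGen n 0), hmid, ← mul_assoc,
    ← hfirst.eq]
  simp only [mul_assoc]

theorem mk_prod_ofFn_eq_sigma :
    PresentedMonoid.mk (SBRel n)
      (List.ofFn fun j : Fin (n - 1) => FreeMonoid.of (SBGen.s j)).prod = sigma n := by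
  rw [map_list_prod, List.map_ofFn, sigma, sigmaProd]
  congr 2
  funext j
  rw [Function.comp_apply, zero_add, sigmaGen_of_lt j.2]
  rfl

end SingularBraidMonoid

open SingularBraidMonoid in
theorem sigma_pow_n_commutes_with_x (n : ℕ) (hn : 2 ≤ n) :
    PresentedMonoid.mk (SBRel n)
        ((List.ofFn (fun j : Fin (n - 1) => FreeMonoid.of (SBGen.s j))).prod) ^ n *
      PresentedMonoid.of (SBRel n) (.x ⟨0, by omega⟩) =
    PresentedMonoid.of (SBRel n) (.x ⟨0, by omega⟩) *
      PresentedMonoid.mk (SBRel n)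
        ((List.ofFn (fun j : Fin (n - 1) => FreeMonoid.of (SBGen.s j))).prod) ^ n := by
  rw [mk_prod_ofFn_eq_sigma, ← xGen_of_lt]
  calc sigma n ^ n * xGen n 0
      = sigma n ^ 2 * (sigma n ^ (n - 2) * xGen n 0) := by
        rw [← mul_assoc, ← pow_add, Nat.add_sub_cancel' hn]
    _ = sigma n ^ 2 * xGen n (n - 2) * sigma n ^ (n - 2) := by
        rw [sigma_pow_mul_xGen_zero le_rfl, mul_assoc]
    _ = xGen n 0 * sigma n ^ n := by
        rw [sigma_sq_mul_xGen hn, mul_assoc, ← pow_add, Nat.add_sub_cancel' hn]
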